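/- Let X ∈ ℝ^{n×p}, λ > 0, β ∈ ℝ^p, ε ∈ ℝ^n, and let pen be a real-valued polyhedral gauge on ℝ^p (pen(b) = max{⟨u_1,b⟩,…,⟨u_k,b⟩} with u_1 = 0). Assume uniform uniqueness: for every y ∈ ℝ^n the set S_{X,λpen}(y) is a singleton {β̂(y)}. Assume the pattern of β is accessible, i.e. row(X) ∩ ∂pen(β) ≠ ∅. For r ∈ ℕ set y^(r) = X(rβ) + ε. Then β̂(y^(r))/r converges to β as r → ∞. -/

import Mathlib

open scoped RealInnerProductSpace

noncomputable section

/-- Convert a plain coordinate vector to an element of Euclidean space. -/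
def toEuc {n : ℕ} (v : Fin n → ℝ) : EuclideanSpace ℝ (Fin n) :=
  (WithLp.equiv 2 (Fin n → ℝ)).symm v

/-- The subdifferential of `φ : ℝ^p → ℝ` at `β`:
`∂φ(β) = {s : φ(β) + ⟪s, b − β⟫ ≤ φ(b) for all b}`. -/
def subdiff {p : ℕ} (φ : EuclideanSpace ℝ (Fin p) → ℝ) (β : EuclideanSpace ℝ (Fin p)) :
    Set (EuclideanSpace ℝ (Fin p)) :=
  {s | ∀ b, φ β + ⟪s, b - β⟫ ≤ φ b}

/-- `S_{X,λpen}(y)`: the set of minimizers of `b ↦ (1/2)‖y − Xb‖₂² + λ·pen(b)`. -/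
def Smin {n p : ℕ} (X : Matrix (Fin n) (Fin p) ℝ) (lam : ℝ)
    (pen : EuclideanSpace ℝ (Fin p) → ℝ) (y : EuclideanSpace ℝ (Fin n)) :
    Set (EuclideanSpace ℝ (Fin p)) :=
  {b | ∀ b' : EuclideanSpace ℝ (Fin p), (1/2) * ‖y - toEuc (X.mulVec b)‖^2 + lam * pen b
        ≤ (1/2) * ‖y - toEuc (X.mulVec b')‖^2 + lam * pen b'}

/-- The row space of a matrix `X`: `{Xᵀz : z ∈ ℝ^n}`. -/
def rowSpace {n p : ℕ} (X : Matrix (Fin n) (Fin p) ℝ) : Set (EuclideanSpace ℝ (Fin p)) :=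
  Set.range fun z : EuclideanSpace ℝ (Fin n) => toEuc (X.transpose.mulVec z)

/-- The normal cone of a set `K` at `x`: `{s : ⟪s, b − x⟫ ≤ 0 for all b ∈ K}`. -/
def normalCone' {p : ℕ} (K : Set (EuclideanSpace ℝ (Fin p))) (x : EuclideanSpace ℝ (Fin p)) :
    Set (EuclideanSpace ℝ (Fin p)) :=
  {s | ∀ b ∈ K, ⟪s, b - x⟫ ≤ 0}

/-- The supremum norm `‖x‖_∞` on Euclidean space. -/
def supNorm {p : ℕ} (x : EuclideanSpace ℝ (Fin p)) : ℝ := ⨆ i, abs (x i)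

/-- `F` is an (exposed) face of `P`: `F = {x ∈ P : ⟪a,x⟫ = c}` for some valid inequality
`⟪a,x⟫ ≤ c` of `P`. -/
def IsFace {p : ℕ} (P F : Set (EuclideanSpace ℝ (Fin p))) : Prop :=
  ∃ (a : EuclideanSpace ℝ (Fin p)) (c : ℝ),
    (∀ x ∈ P, ⟪a, x⟫ ≤ c) ∧ F = {x ∈ P | ⟪a, x⟫ = c}

/-!
Write `b̂ᵣ` for the estimate at `y⁽ʳ⁾` and `F b = (Xb, pen b)`. Comparing `b̂ᵣ` with `rβ` in the
objective, and using that a row-space subgradient `Xᵀz` of `pen` at `β` is one at `rβ` as well,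
shows that `F b̂ᵣ - F (rβ)` stays bounded; by homogeneity of `F` this gives `F (b̂ᵣ / r) → F β`.
Uniqueness of the estimator makes `F` injective at `β`: every `x` with `F x = F β` satisfies the
optimality condition for `y = Xβ + λz`, as `β` does. The same argument at `0` shows that the
continuous, positively homogeneous map `F` vanishes only at `0`, hence is coercive, so `b̂ᵣ / r`
stays in a compact set on which `β` is its only possible cluster point.
-/

open Filter Topology

theorem tendsto_of_tendsto_comp_of_isCompact {α E Y : Type*} [TopologicalSpace E]
    [TopologicalSpace Y] [T2Space Y] {l : Filter α} {c : α → E} {f : E → Y} {x₀ : E} {K : Set E}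
    (hf : Continuous f) (hinj : ∀ x, f x = f x₀ → x = x₀) (hK : IsCompact K)
    (hcK : ∀ᶠ a in l, c a ∈ K) (hfc : Tendsto (fun a => f (c a)) l (𝓝 (f x₀))) :
    Tendsto c l (𝓝 x₀) :=
  hK.tendsto_nhds_of_unique_mapClusterPt hcK fun x _ hx =>
    hinj x <| eq_of_nhds_neBot <|
      (hx.continuousAt_comp hf.continuousAt).neBot.mono (inf_le_inf_left _ hfc)

theorem tendsto_of_tendsto_comp_of_mul_norm_le {α E F : Type*} [SeminormedAddCommGroup E]
    [ProperSpace E] [NormedAddCommGroup F] {l : Filter α} {c : α → E} {f : E → F} {x₀ : E}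
    {m : ℝ} (hf : Continuous f) (hm : 0 < m) (hmf : ∀ x, m * ‖x‖ ≤ ‖f x‖)
    (hinj : ∀ x, f x = f x₀ → x = x₀) (hfc : Tendsto (fun a => f (c a)) l (𝓝 (f x₀))) :
    Tendsto c l (𝓝 x₀) := by
  refine tendsto_of_tendsto_comp_of_isCompact hf hinj
    (isCompact_closedBall 0 ((‖f x₀‖ + 1) / m)) ?_ hfc
  filter_upwards [hfc.norm.eventually (eventually_lt_nhds (lt_add_one ‖f x₀‖))] with a ha
  rw [mem_closedBall_zero_iff, le_div_iff₀ hm, mul_comm]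
  exact (hmf _).trans ha.le

theorem exists_pos_mul_norm_le_norm_of_homogeneous {E F : Type*} [NormedAddCommGroup E]
    [NormedSpace ℝ E] [FiniteDimensional ℝ E] [NormedAddCommGroup F] [NormedSpace ℝ F]
    {f : E → F} (hf : Continuous f) (hhom : ∀ t : ℝ, 0 ≤ t → ∀ x, f (t • x) = t • f x)
    (hzero : ∀ x, f x = 0 → x = 0) : ∃ m > 0, ∀ x, m * ‖x‖ ≤ ‖f x‖ := by
  rcases subsingleton_or_nontrivial E with hE | hE
  · exact ⟨1, one_pos, fun x => by simp [Subsingleton.elim x 0]⟩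
  obtain ⟨x₀, hx₀, hmin⟩ := (isCompact_sphere (0 : E) 1).exists_isMinOn
    (NormedSpace.sphere_nonempty.2 zero_le_one) hf.norm.continuousOn
  rw [mem_sphere_zero_iff_norm] at hx₀
  refine ⟨‖f x₀‖, norm_pos_iff.2 fun h => by simp [hzero x₀ h] at hx₀, fun x => ?_⟩
  rcases eq_or_ne x 0 with rfl | hx
  · simp
  have hxn : 0 < ‖x‖ := norm_pos_iff.2 hx
  have hunit : ‖x‖⁻¹ • x ∈ Metric.sphere (0 : E) 1 := by
    rw [mem_sphere_zero_iff_norm, norm_smul, norm_inv, norm_norm, inv_mul_cancel₀ hxn.ne']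
  calc ‖f x₀‖ * ‖x‖ ≤ ‖f (‖x‖⁻¹ • x)‖ * ‖x‖ := by gcongr; exact hmin hunit
    _ = ‖f x‖ := by
      rw [hhom _ (inv_nonneg.2 hxn.le), norm_smul, norm_inv, norm_norm]
      field_simp

theorem tendsto_comp_inv_smul_of_norm_sub_le {E F : Type*} [AddCommGroup E] [Module ℝ E]
    [SeminormedAddCommGroup F] [NormedSpace ℝ F] {f : E → F}
    (hhom : ∀ t : ℝ, 0 ≤ t → ∀ x, f (t • x) = t • f x) {b : ℕ → E} {β : E} {C : ℝ}
    (hb : ∀ r : ℕ, 0 < r → ‖f (b r) - f ((r : ℝ) • β)‖ ≤ C) :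
    Tendsto (fun r : ℕ => f ((r : ℝ)⁻¹ • b r)) atTop (𝓝 (f β)) := by
  rw [tendsto_iff_norm_sub_tendsto_zero]
  refine squeeze_zero' (Eventually.of_forall fun _ => norm_nonneg _) ?_
    (by simpa using tendsto_inv_atTop_nhds_zero_nat.const_mul C)
  filter_upwards [eventually_gt_atTop 0] with r hr
  have hr' : (0 : ℝ) < r := Nat.cast_pos.2 hr
  calc ‖f ((r : ℝ)⁻¹ • b r) - f β‖ = (r : ℝ)⁻¹ * ‖f (b r) - f ((r : ℝ) • β)‖ := by
        rw [hhom _ (inv_nonneg.2 hr'.le), hhom _ hr'.le,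
          ← norm_smul_of_nonneg (inv_nonneg.2 hr'.le), smul_sub, inv_smul_smul₀ hr'.ne']
    _ ≤ C * (r : ℝ)⁻¹ := by rw [mul_comm]; gcongr; exact hb r hr

section PolyhedralGauge

variable {E ι : Type*} [NormedAddCommGroup E] [InnerProductSpace ℝ E] [Fintype ι] [Nonempty ι]
  (u : ι → E)

def polyhedralGauge (x : E) : ℝ :=
  Finset.univ.sup' Finset.univ_nonempty fun i => ⟪u i, x⟫

theorem polyhedralGauge_nonneg {i₀ : ι} (hu : u i₀ = 0) (x : E) : 0 ≤ polyhedralGauge u x := by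
  calc 0 = ⟪u i₀, x⟫ := by simp [hu]
    _ ≤ polyhedralGauge u x := Finset.le_sup' (fun i => ⟪u i, x⟫) (Finset.mem_univ i₀)

theorem polyhedralGauge_zero : polyhedralGauge u 0 = 0 := by
  simp [polyhedralGauge]

theorem polyhedralGauge_smul {t : ℝ} (ht : 0 ≤ t) (x : E) :
    polyhedralGauge u (t • x) = t * polyhedralGauge u x := by
  simp only [polyhedralGauge, real_inner_smul_right]
  exact (Finset.apply_sup'_eq_sup'_comp _ (t * ·) fun a b => mul_max_of_nonneg a b ht).symm

theorem continuous_polyhedralGauge : Continuous (polyhedralGauge u) :=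
  Continuous.finset_sup'_apply _ fun _ _ => continuous_const.inner continuous_id

end PolyhedralGauge

theorem smul_mem_subdiff {p : ℕ} {pen : EuclideanSpace ℝ (Fin p) → ℝ}
    (hhom : ∀ t : ℝ, 0 ≤ t → ∀ x, pen (t • x) = t * pen x) {s β : EuclideanSpace ℝ (Fin p)}
    {r : ℝ} (hr : 0 < r) (hs : s ∈ subdiff pen β) : s ∈ subdiff pen (r • β) := by
  intro b
  have h := mul_le_mul_of_nonneg_left (hs (r⁻¹ • b)) hr.le
  rw [hhom _ (inv_nonneg.2 hr.le), mul_add, ← mul_assoc, mul_inv_cancel₀ hr.ne', one_mul] at h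
  have hinner : ⟪s, b - r • β⟫ = r * ⟪s, r⁻¹ • b - β⟫ := by
    rw [← inner_smul_right, smul_sub, smul_inv_smul₀ hr.ne']
  rwa [hhom _ hr.le, hinner]

section Estimator

variable {n p : ℕ} (X : Matrix (Fin n) (Fin p) ℝ) {lam : ℝ} {pen : EuclideanSpace ℝ (Fin p) → ℝ}

def fitPen (pen : EuclideanSpace ℝ (Fin p) → ℝ) (b : EuclideanSpace ℝ (Fin p)) :
    EuclideanSpace ℝ (Fin n) × ℝ :=
  (X.toEuclideanLin b, pen b)

theorem continuous_fitPen (hpen : Continuous pen) : Continuous (fitPen X pen) :=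
  (LinearMap.continuous_of_finiteDimensional _).prodMk hpen

theorem fitPen_smul (hhom : ∀ t : ℝ, 0 ≤ t → ∀ x, pen (t • x) = t * pen x) {t : ℝ} (ht : 0 ≤ t)
    (b : EuclideanSpace ℝ (Fin p)) : fitPen X pen (t • b) = t • fitPen X pen b := by
  simp [fitPen, hhom t ht]

theorem inner_toEuc_transpose_mulVec (z : EuclideanSpace ℝ (Fin n))
    (d : EuclideanSpace ℝ (Fin p)) :
    ⟪toEuc (X.transpose.mulVec z), d⟫ = ⟪z, X.toEuclideanLin d⟫ := by
  rw [← LinearMap.adjoint_inner_left, ← Matrix.toEuclideanLin_conjTranspose_eq_adjoint,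
    Matrix.conjTranspose_eq_transpose_of_trivial]
  rfl

variable {X}

theorem sub_le_of_transpose_mulVec_mem_subdiff {z : EuclideanSpace ℝ (Fin n)}
    {b₀ : EuclideanSpace ℝ (Fin p)} (hz : toEuc (X.transpose.mulVec z) ∈ subdiff pen b₀)
    (b : EuclideanSpace ℝ (Fin p)) :
    ⟪z, X.toEuclideanLin b - X.toEuclideanLin b₀⟫ ≤ pen b - pen b₀ := by
  have := hz b
  rw [inner_toEuc_transpose_mulVec, map_sub] at this
  linarith

theorem mem_Smin_of_transpose_mulVec_mem_subdiff (hlam : 0 ≤ lam)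
    {y z : EuclideanSpace ℝ (Fin n)} {b : EuclideanSpace ℝ (Fin p)}
    (hz : toEuc (X.transpose.mulVec z) ∈ subdiff pen b) (hy : y - X.toEuclideanLin b = lam • z) :
    b ∈ Smin X lam pen y := by
  intro b'
  change (1/2) * ‖y - X.toEuclideanLin b‖ ^ 2 + lam * pen b
    ≤ (1/2) * ‖y - X.toEuclideanLin b'‖ ^ 2 + lam * pen b'
  have hsub := sub_le_of_transpose_mulVec_mem_subdiff hz b'
  have hres : y - X.toEuclideanLin b' = lam • z - (X.toEuclideanLin b' - X.toEuclideanLin b) := by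
    rw [← hy]; abel
  rw [hy, hres, norm_sub_sq_real, real_inner_smul_left]
  nlinarith [mul_le_mul_of_nonneg_left hsub hlam,
    sq_nonneg ‖X.toEuclideanLin b' - X.toEuclideanLin b‖]

theorem eq_of_fitPen_eq (hlam : 0 ≤ lam) (huniq : ∀ y, (Smin X lam pen y).Subsingleton)
    {z : EuclideanSpace ℝ (Fin n)} {β x : EuclideanSpace ℝ (Fin p)}
    (hz : toEuc (X.transpose.mulVec z) ∈ subdiff pen β)
    (hx : fitPen X pen x = fitPen X pen β) : x = β := by
  obtain ⟨hXx, hpx⟩ := Prod.ext_iff.1 hx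
  change X.toEuclideanLin x = X.toEuclideanLin β at hXx
  change pen x = pen β at hpx
  have hzx : toEuc (X.transpose.mulVec z) ∈ subdiff pen x := by
    intro b
    have h := hz b
    have hxβ : ⟪toEuc (X.transpose.mulVec z), x - β⟫ = 0 := by
      rw [inner_toEuc_transpose_mulVec, map_sub, hXx, sub_self, inner_zero_right]
    rw [hpx, show b - x = (b - β) - (x - β) by abel, inner_sub_right, hxβ, sub_zero]
    exact h
  have hy : X.toEuclideanLin β + lam • z - X.toEuclideanLin β = lam • z := add_sub_cancel_left _ _
  refine huniq _ (mem_Smin_of_transpose_mulVec_mem_subdiff hlam hzx ?_)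
    (mem_Smin_of_transpose_mulVec_mem_subdiff hlam hz hy)
  rwa [hXx]

theorem eq_zero_of_fitPen_eq_zero (hlam : 0 ≤ lam) (huniq : ∀ y, (Smin X lam pen y).Subsingleton)
    (hpen0 : pen 0 = 0) (hnonneg : ∀ b, 0 ≤ pen b) {x : EuclideanSpace ℝ (Fin p)}
    (hx : fitPen X pen x = 0) : x = 0 := by
  refine eq_of_fitPen_eq hlam huniq (z := 0) (fun b => ?_) ?_
  · simpa [toEuc, hpen0] using hnonneg b
  · rw [hx]
    simp [fitPen, hpen0, Prod.zero_eq_mk]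

theorem basic_inequality_of_mem_Smin {ε : EuclideanSpace ℝ (Fin n)}
    {b b₀ : EuclideanSpace ℝ (Fin p)} (hb : b ∈ Smin X lam pen (X.toEuclideanLin b₀ + ε)) :
    (1/2) * ‖X.toEuclideanLin b - X.toEuclideanLin b₀‖ ^ 2 + lam * (pen b - pen b₀)
      ≤ ⟪ε, X.toEuclideanLin b - X.toEuclideanLin b₀⟫ := by
  have h := hb b₀
  change (1/2) * ‖X.toEuclideanLin b₀ + ε - X.toEuclideanLin b‖ ^ 2 + lam * pen b
    ≤ (1/2) * ‖X.toEuclideanLin b₀ + ε - X.toEuclideanLin b₀‖ ^ 2 + lam * pen b₀ at h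
  rw [add_sub_cancel_left, show X.toEuclideanLin b₀ + ε - X.toEuclideanLin b
    = ε - (X.toEuclideanLin b - X.toEuclideanLin b₀) by abel, norm_sub_sq_real] at h
  linarith

theorem norm_fitPen_sub_le_of_mem_Smin (hlam : 0 < lam) {z ε : EuclideanSpace ℝ (Fin n)}
    {b b₀ : EuclideanSpace ℝ (Fin p)} (hz : toEuc (X.transpose.mulVec z) ∈ subdiff pen b₀)
    (hb : b ∈ Smin X lam pen (X.toEuclideanLin b₀ + ε)) :
    ‖fitPen X pen b - fitPen X pen b₀‖ ≤ (1 + ‖z‖ + ‖ε‖ / lam) * (2 * ‖ε - lam • z‖) := by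
  have hbasic := basic_inequality_of_mem_Smin hb
  have hsub := sub_le_of_transpose_mulVec_mem_subdiff hz b
  set d := X.toEuclideanLin b - X.toEuclideanLin b₀
  have hd : ‖d‖ ≤ 2 * ‖ε - lam • z‖ := by
    have h1 : (1/2) * ‖d‖ ^ 2 ≤ ‖ε - lam • z‖ * ‖d‖ := by
      have := real_inner_le_norm (ε - lam • z) d
      rw [inner_sub_left, real_inner_smul_left] at this
      nlinarith [mul_le_mul_of_nonneg_left hsub hlam.le]
    rcases (norm_nonneg d).eq_or_lt with h0 | hpos
    · rw [← h0]; positivity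
    · nlinarith
  have hup : pen b - pen b₀ ≤ ‖ε‖ / lam * ‖d‖ := by
    rw [div_mul_eq_mul_div, le_div_iff₀ hlam]
    nlinarith [real_inner_le_norm ε d, sq_nonneg ‖d‖]
  have hlow : -(‖z‖ * ‖d‖) ≤ pen b - pen b₀ :=
    (neg_le_of_abs_le (abs_real_inner_le_norm z d)).trans hsub
  have hC : 0 ≤ 2 * ‖ε - lam • z‖ := by positivity
  have hεl : 0 ≤ ‖ε‖ / lam := by positivity
  rw [norm_prod_le_iff]
  constructor
  · change ‖d‖ ≤ _
    nlinarith [norm_nonneg z]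
  · change |pen b - pen b₀| ≤ _
    rw [abs_le]
    constructor <;> nlinarith [norm_nonneg z, norm_nonneg d]

end Estimator

/-- Under uniform uniqueness and accessibility of the pattern of `β`, for
`y⁽ʳ⁾ = X(rβ) + ε`, the rescaled estimator `β̂(y⁽ʳ⁾)/r` converges to `β` as `r → ∞`. -/
theorem rescaled_estimator_tendsto {n p k : ℕ}
    (X : Matrix (Fin n) (Fin p) ℝ) (lam : ℝ) (hlam : 0 < lam)
    (u : Fin (k + 1) → EuclideanSpace ℝ (Fin p)) (hu : u 0 = 0)
    (pen : EuclideanSpace ℝ (Fin p) → ℝ)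
    (hpen : ∀ x, pen x = Finset.univ.sup' Finset.univ_nonempty fun i => ⟪u i, x⟫)
    (β : EuclideanSpace ℝ (Fin p)) (ε : EuclideanSpace ℝ (Fin n))
    (betahat : EuclideanSpace ℝ (Fin n) → EuclideanSpace ℝ (Fin p))
    (huniq : ∀ y, Smin X lam pen y = {betahat y})
    (hacc : (rowSpace X ∩ subdiff pen β).Nonempty) :
    Filter.Tendsto
      (fun r : ℕ => ((r : ℝ))⁻¹ • betahat (toEuc (X.mulVec ((r : ℝ) • β)) + ε))
      Filter.atTop (nhds β) := by
  obtain rfl : pen = polyhedralGauge u := funext hpen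
  obtain ⟨_, ⟨z, rfl⟩, hz⟩ := hacc
  have hsingle : ∀ y, (Smin X lam (polyhedralGauge u) y).Subsingleton :=
    fun y => huniq y ▸ Set.subsingleton_singleton
  have hhom : ∀ t : ℝ, 0 ≤ t → ∀ x, polyhedralGauge u (t • x) = t * polyhedralGauge u x :=
    fun _ ht => polyhedralGauge_smul u ht
  have hFcont := continuous_fitPen X (continuous_polyhedralGauge u)
  have hFhom : ∀ t : ℝ, 0 ≤ t → ∀ x, fitPen X (polyhedralGauge u) (t • x)
      = t • fitPen X (polyhedralGauge u) x :=
    fun _ ht => fitPen_smul X hhom ht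
  have hbound : ∀ r : ℕ, 0 < r →
      ‖fitPen X (polyhedralGauge u) (betahat (toEuc (X.mulVec ((r : ℝ) • β)) + ε))
        - fitPen X (polyhedralGauge u) ((r : ℝ) • β)‖
        ≤ (1 + ‖z‖ + ‖ε‖ / lam) * (2 * ‖ε - lam • z‖) :=
    fun r hr => norm_fitPen_sub_le_of_mem_Smin hlam (smul_mem_subdiff hhom (by positivity) hz)
      ((huniq _).symm ▸ rfl)
  obtain ⟨m, hm, hmF⟩ := exists_pos_mul_norm_le_norm_of_homogeneous hFcont hFhom
    fun _ => eq_zero_of_fitPen_eq_zero hlam.le hsingle (polyhedralGauge_zero u)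
      (polyhedralGauge_nonneg u hu)
  exact tendsto_of_tendsto_comp_of_mul_norm_le hFcont hm hmF
    (fun _ => eq_of_fitPen_eq hlam.le hsingle hz)
    (tendsto_comp_inv_smul_of_norm_sub_le hFhom hbound)
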